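/- Let $h > 0$ and let $v$ be a Schwartz function on $\mathbb{R}^2$. Define the semiclassical Fourier transform $\hat{v}(\xi,\eta) = \iint_{\mathbb{R}^2} e^{-i(x\xi + y\eta)/h}\, v(x,y)\, dx\, dy$ and set $u(t,x,y) = (2\pi h)^{-2}\,\mathrm{sech}\, t \iint_{\mathbb{R}^2} \exp\big(\tfrac{i}{h}[(xy - \xi\eta)\tanh t + (x\xi + y\eta)\,\mathrm{sech}\, t]\big)\, \hat{v}(\xi,\eta)\, d\xi\, d\eta$. Then $u$ solves the evolution equation exactly: for all $(t,x,y) \in \mathbb{R}^3$, $\frac{h}{i}\,\partial_t u(t,x,y) - h^2\, \partial_x \partial_y u(t,x,y) - x y\, u(t,x,y) = 0$, and $u(0,x,y) = v(x,y)$. -/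

import Mathlib

noncomputable section

open MeasureTheory

/-- The semiclassical Fourier transform of `v`, `v̂(ξ,η) = ∬ e^{-i(xξ+yη)/h} v(x,y) dx dy`. -/
def scFourier (h : ℝ) (v : SchwartzMap (ℝ × ℝ) ℂ) (w : ℝ × ℝ) : ℂ :=
  ∫ q : ℝ × ℝ, Complex.exp (-(Complex.I / (h : ℂ)) * ((q.1 : ℂ) * (w.1 : ℂ) + (q.2 : ℂ) * (w.2 : ℂ))) * v q

/-- The FIO solution
`u(t,x,y) = (2πh)⁻² sech t ∬ exp((i/h)[(xy-ξη)tanh t + (xξ+yη)sech t]) v̂(ξ,η) dξ dη`. -/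
def fioSolution (h : ℝ) (v : SchwartzMap (ℝ × ℝ) ℂ) (t x y : ℝ) : ℂ :=
  (((2 * Real.pi * h) ^ 2)⁻¹ : ℝ) * ((Real.cosh t)⁻¹ : ℝ) *
    ∫ w : ℝ × ℝ, Complex.exp ((Complex.I / (h : ℂ)) *
      ((((x * y : ℝ) : ℂ) - (w.1 : ℂ) * (w.2 : ℂ)) * (Real.tanh t : ℂ) +
        (((x : ℂ) * (w.1 : ℂ) + (y : ℂ) * (w.2 : ℂ))) * (((Real.cosh t)⁻¹ : ℝ) : ℂ))) *
      scFourier h v w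

/-!
For each frequency `w = (ξ, η)` the kernel `sech t · exp (i φ / h)`, with phase
`φ = (xy - ξη) tanh t + (xξ + yη) sech t`, solves the equation exactly: `φ` solves the eikonal
equation `∂ₜφ + ∂ₓφ ∂_yφ = xy` (this is `tanh² + sech² = 1`), and the amplitude `sech t` solves
the transport equation `∂ₜa = -a ∂ₓ∂_yφ = -a tanh t`. The solution `u` is a superposition of these
kernels against `v̂`, which is a Schwartz function, while the kernel and its derivatives grow at
most quadratically in `w`; so the derivatives may be taken under the integral. At `t = 0` the
kernel is `exp (i (xξ + yη) / h)` and the formula for `u` is Fourier inversion.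
-/

open Real FourierTransform
open scoped SchwartzMap
open Complex (I exp)

lemma Real.hasDerivAt_tanh (t : ℝ) : HasDerivAt tanh ((cosh t)⁻¹ ^ 2) t := by
  have hc := (cosh_pos t).ne'
  have h := (hasDerivAt_sinh t).div (hasDerivAt_cosh t) hc
  rw [show sinh / cosh = tanh from funext fun s => (tanh_eq_sinh_div_cosh s).symm] at h
  refine h.congr_deriv ?_
  field_simp
  nlinarith [cosh_sq_sub_sinh_sq t]

lemma Real.hasDerivAt_inv_cosh (t : ℝ) :
    HasDerivAt (fun s => (cosh s)⁻¹) (-(tanh t * (cosh t)⁻¹)) t := by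
  refine ((hasDerivAt_cosh t).inv (cosh_pos t).ne').congr_deriv ?_
  rw [tanh_eq_sinh_div_cosh]
  ring

lemma Real.tanh_sq_add_inv_cosh_sq (t : ℝ) : tanh t ^ 2 + (cosh t)⁻¹ ^ 2 = 1 := by
  have hc := (cosh_pos t).ne'
  rw [tanh_eq_sinh_div_cosh]
  field_simp
  nlinarith [cosh_sq_sub_sinh_sq t]

lemma Real.abs_mul_tanh_add_mul_inv_cosh_le (c z t : ℝ) :
    |c * tanh t + z * (cosh t)⁻¹| ≤ |c| + |z| := by
  have hsech : (cosh t)⁻¹ ≤ 1 := inv_le_one_of_one_le₀ (one_le_cosh t)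
  calc |c * tanh t + z * (cosh t)⁻¹| ≤ |c| * |tanh t| + |z| * (cosh t)⁻¹ := by
        grw [abs_add_le, abs_mul, abs_mul, abs_of_pos (inv_pos.mpr (cosh_pos t))]
    _ ≤ |c| + |z| := by
        gcongr
        · exact mul_le_of_le_one_right (abs_nonneg c) (abs_tanh_lt_one t).le
        · exact mul_le_of_le_one_right (abs_nonneg z) hsech

namespace SchwartzMap

variable {D V : Type*} [NormedAddCommGroup D] [NormedSpace ℝ D] [MeasurableSpace D]
  [BorelSpace D] [SecondCountableTopology D] [NormedAddCommGroup V] [NormedSpace ℝ V]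
  {μ : Measure D} [μ.HasTemperateGrowth]

lemma integrable_one_add_norm_pow_mul (G : 𝓢(D, V)) (k : ℕ) :
    Integrable (fun w => (1 + ‖w‖) ^ k * ‖G w‖) μ := by
  refine (((G.integrable_pow_mul μ 0).add (G.integrable_pow_mul μ k)).const_mul
    (2 ^ (k - 1))).mono' (by fun_prop) (.of_forall fun w => ?_)
  rw [norm_mul, norm_norm, Real.norm_of_nonneg (by positivity), Pi.add_apply, pow_zero,
    ← add_mul, ← mul_assoc]
  gcongr
  simpa using add_pow_le zero_le_one (norm_nonneg w) k

lemma integrable_mul_of_norm_le (G : 𝓢(D, ℂ)) {f : D → ℂ} (hf : AEStronglyMeasurable f μ)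
    {C : ℝ} {k : ℕ} (hf_le : ∀ w, ‖f w‖ ≤ C * (1 + ‖w‖) ^ k) :
    Integrable (fun w => f w * G w) μ := by
  refine ((G.integrable_one_add_norm_pow_mul k).const_mul C).mono'
    (hf.mul G.continuous.aestronglyMeasurable) (.of_forall fun w => ?_)
  rw [norm_mul, ← mul_assoc]
  gcongr
  exact hf_le w

lemma hasDerivAt_integral_mul (G : 𝓢(D, ℂ)) {f f' : ℝ → D → ℂ} {s₀ : ℝ} {B : ℝ → ℝ} {k : ℕ}
    (hf : ∀ s, AEStronglyMeasurable (f s) μ) (hf_int : Integrable (fun w => f s₀ w * G w) μ)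
    (hf' : AEStronglyMeasurable (f' s₀) μ) (hB : ContinuousAt B s₀)
    (hf'_le : ∀ s w, ‖f' s w‖ ≤ B s * (1 + ‖w‖) ^ k)
    (hderiv : ∀ s w, HasDerivAt (f · w) (f' s w) s) :
    HasDerivAt (fun s => ∫ w, f s w * G w ∂μ) (∫ w, f' s₀ w * G w ∂μ) s₀ := by
  obtain ⟨U, hU, hBU⟩ := (hB.eventually (gt_mem_nhds (lt_add_one (B s₀)))).exists_mem
  refine (hasDerivAt_integral_of_dominated_loc_of_deriv_le hU
    (.of_forall fun s => (hf s).mul G.continuous.aestronglyMeasurable) hf_int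
    (hf'.mul G.continuous.aestronglyMeasurable) (.of_forall fun w s hs => ?_)
    ((G.integrable_one_add_norm_pow_mul k).const_mul (B s₀ + 1))
    (.of_forall fun w s _ => (hderiv s w).mul_const (G w))).2
  rw [norm_mul, ← mul_assoc]
  gcongr
  exact (hf'_le s w).trans (by gcongr; exact (hBU s hs).le)

end SchwartzMap

/-- Mathlib's Fourier transform needs an inner product space, and `ℝ × ℝ` carries the sup norm. -/
def prodEquivEuclidean : (ℝ × ℝ) ≃L[ℝ] EuclideanSpace ℝ (Fin 2) :=
  (ContinuousLinearEquiv.finTwoArrow ℝ ℝ).symm.trans (EuclideanSpace.equiv (Fin 2) ℝ).symm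

lemma inner_prodEquivEuclidean (p q : ℝ × ℝ) :
    inner ℝ (prodEquivEuclidean p) (prodEquivEuclidean q) = p.1 * q.1 + p.2 * q.2 := by
  simp [prodEquivEuclidean, PiLp.inner_apply, Fin.sum_univ_two, mul_comm]

lemma measurePreserving_prodEquivEuclidean :
    MeasurePreserving prodEquivEuclidean volume volume :=
  (EuclideanSpace.volume_preserving_symm_measurableEquiv_toLp (Fin 2)).symm.comp
    (volume_preserving_finTwoArrow ℝ).symm

section ScFourier

variable {h : ℝ}

def scFourierSchwartz (hh : h ≠ 0) (v : 𝓢(ℝ × ℝ, ℂ)) : 𝓢(ℝ × ℝ, ℂ) :=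
  SchwartzMap.compCLMOfContinuousLinearEquiv ℂ
    (prodEquivEuclidean.trans
      (ContinuousLinearEquiv.smulLeft (Units.mk0 (2 * π * h)⁻¹ (by positivity))))
    (𝓕 (SchwartzMap.compCLMOfContinuousLinearEquiv ℂ prodEquivEuclidean.symm v))

lemma scFourierSchwartz_apply (hh : h ≠ 0) (v : 𝓢(ℝ × ℝ, ℂ)) (w : ℝ × ℝ) :
    scFourierSchwartz hh v w =
      𝓕 (v ∘ prodEquivEuclidean.symm) ((2 * π * h)⁻¹ • prodEquivEuclidean w) :=
  rfl

lemma coe_scFourierSchwartz (hh : h ≠ 0) (v : 𝓢(ℝ × ℝ, ℂ)) :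
    ⇑(scFourierSchwartz hh v) = scFourier h v := by
  ext w
  rw [scFourierSchwartz_apply, Real.fourier_eq', scFourier,
    ← measurePreserving_prodEquivEuclidean.integral_comp
      prodEquivEuclidean.toHomeomorph.measurableEmbedding]
  congr 1 with q
  simp only [real_inner_smul_right, inner_prodEquivEuclidean, Function.comp_apply,
    ContinuousLinearEquiv.symm_apply_apply, smul_eq_mul]
  congr 2
  push_cast
  field_simp

lemma integral_exp_mul_scFourier (hh : h ≠ 0) (v : 𝓢(ℝ × ℝ, ℂ)) (x y : ℝ) :
    ∫ w : ℝ × ℝ, exp (I / h * ↑(x * w.1 + y * w.2)) * scFourier h v w =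
      ((2 * π * h) ^ 2 : ℝ) * v (x, y) := by
  set V := SchwartzMap.compCLMOfContinuousLinearEquiv ℂ prodEquivEuclidean.symm v
  set g : EuclideanSpace ℝ (Fin 2) → ℂ :=
    fun q => exp (↑(2 * π * inner ℝ q (prodEquivEuclidean (x, y))) * I) • 𝓕 ⇑V q
  have hg : ∀ w, exp (I / h * ↑(x * w.1 + y * w.2)) * scFourier h v w =
      g ((2 * π * h)⁻¹ • prodEquivEuclidean w) := by
    intro w
    rw [← coe_scFourierSchwartz hh, scFourierSchwartz_apply]
    simp only [g, smul_eq_mul, real_inner_smul_left, inner_prodEquivEuclidean]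
    congr 2
    push_cast
    field_simp
  have hinv : ∫ q, g q = v (x, y) := by
    rw [← Real.fourierInv_eq', ← SchwartzMap.fourier_coe, ← SchwartzMap.fourierInv_coe,
      fourierInv_fourier_eq]
    simp [V]
  simp_rw [hg]
  rw [measurePreserving_prodEquivEuclidean.integral_comp
      prodEquivEuclidean.toHomeomorph.measurableEmbedding (fun q => g ((2 * π * h)⁻¹ • q)),
    Measure.integral_comp_smul, finrank_euclideanSpace_fin, hinv, Complex.real_smul,
    abs_of_pos (by positivity), inv_pow, inv_inv]

end ScFourier

def phase (t x y : ℝ) (w : ℝ × ℝ) : ℝ :=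
  (x * y - w.1 * w.2) * tanh t + (x * w.1 + y * w.2) * (cosh t)⁻¹

def kernel (h t x y : ℝ) (w : ℝ × ℝ) : ℂ :=
  ((cosh t)⁻¹ : ℝ) * exp (I / h * phase t x y w)

def kernelDt (h t x y : ℝ) (w : ℝ × ℝ) : ℂ :=
  (-(tanh t : ℂ) + I / h * ↑((cosh t)⁻¹ * ((x * y - w.1 * w.2) * (cosh t)⁻¹
    - (x * w.1 + y * w.2) * tanh t))) * kernel h t x y w

def kernelDy (h t x y : ℝ) (w : ℝ × ℝ) : ℂ :=
  I / h * ↑(x * tanh t + w.2 * (cosh t)⁻¹) * kernel h t x y w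

def kernelDxy (h t x y : ℝ) (w : ℝ × ℝ) : ℂ :=
  (I / h * tanh t + (I / h) ^ 2 *
    ↑((y * tanh t + w.1 * (cosh t)⁻¹) * (x * tanh t + w.2 * (cosh t)⁻¹))) * kernel h t x y w

section Kernel

variable (h : ℝ) {t x y : ℝ} (w : ℝ × ℝ)

lemma kernel_pde (hh : h ≠ 0) :
    (h / I) * kernelDt h t x y w - (h : ℂ) ^ 2 * kernelDxy h t x y w
      - ((x * y : ℝ) : ℂ) * kernel h t x y w = 0 := by
  unfold kernelDt kernelDxy
  set P := (cosh t)⁻¹ * ((x * y - w.1 * w.2) * (cosh t)⁻¹ - (x * w.1 + y * w.2) * tanh t)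
  set Q := (y * tanh t + w.1 * (cosh t)⁻¹) * (x * tanh t + w.2 * (cosh t)⁻¹)
  have eikonal : P + Q = x * y := by
    linear_combination (x * y) * tanh_sq_add_inv_cosh_sq t
  have hh' : (h : ℂ) ≠ 0 := Complex.ofReal_ne_zero.mpr hh
  rw [← eikonal, div_eq_mul_inv _ I, Complex.inv_I]
  field_simp
  push_cast
  linear_combination -(kernel h t x y w * (P + Q)) * Complex.I_sq

lemma hasDerivAt_phase_t : HasDerivAt (fun s => phase s x y w)
    ((cosh t)⁻¹ * ((x * y - w.1 * w.2) * (cosh t)⁻¹ - (x * w.1 + y * w.2) * tanh t)) t := by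
  refine (((hasDerivAt_tanh t).const_mul _).add
    ((hasDerivAt_inv_cosh t).const_mul _)).congr_deriv ?_
  ring

lemma hasDerivAt_phase_x :
    HasDerivAt (fun a => phase t a y w) (y * tanh t + w.1 * (cosh t)⁻¹) x := by
  have : (fun a => phase t a y w) = fun a =>
      a * (y * tanh t + w.1 * (cosh t)⁻¹) + (y * w.2 * (cosh t)⁻¹ - w.1 * w.2 * tanh t) := by
    ext a; unfold phase; ring
  rw [this]
  exact (hasDerivAt_mul_const _).add_const _

lemma hasDerivAt_phase_y :
    HasDerivAt (fun b => phase t x b w) (x * tanh t + w.2 * (cosh t)⁻¹) y := by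
  have : (fun b => phase t x b w) = fun b =>
      b * (x * tanh t + w.2 * (cosh t)⁻¹) + (x * w.1 * (cosh t)⁻¹ - w.1 * w.2 * tanh t) := by
    ext b; unfold phase; ring
  rw [this]
  exact (hasDerivAt_mul_const _).add_const _

lemma hasDerivAt_kernel_t : HasDerivAt (fun s => kernel h s x y w) (kernelDt h t x y w) t := by
  refine ((hasDerivAt_inv_cosh t).ofReal_comp.mul
    (((hasDerivAt_phase_t w).ofReal_comp.const_mul (I / h)).cexp)).congr_deriv ?_
  unfold kernelDt kernel
  push_cast
  ring

lemma hasDerivAt_kernel_x :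
    HasDerivAt (fun a => kernel h t a y w)
      (I / h * ↑(y * tanh t + w.1 * (cosh t)⁻¹) * kernel h t x y w) x := by
  refine ((((hasDerivAt_phase_x w).ofReal_comp.const_mul (I / h)).cexp).const_mul
    (((cosh t)⁻¹ : ℝ) : ℂ)).congr_deriv ?_
  unfold kernel
  ring

lemma hasDerivAt_kernel_y : HasDerivAt (fun b => kernel h t x b w) (kernelDy h t x y w) y := by
  refine ((((hasDerivAt_phase_y w).ofReal_comp.const_mul (I / h)).cexp).const_mul
    (((cosh t)⁻¹ : ℝ) : ℂ)).congr_deriv ?_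
  unfold kernelDy kernel
  ring

lemma hasDerivAt_kernelDy_x :
    HasDerivAt (fun a => kernelDy h t a y w) (kernelDxy h t x y w) x := by
  have hlin : HasDerivAt (fun a => a * tanh t + w.2 * (cosh t)⁻¹) (tanh t) x :=
    (hasDerivAt_mul_const _).add_const _
  refine ((hlin.ofReal_comp.const_mul (I / h)).mul (hasDerivAt_kernel_x h w)).congr_deriv ?_
  unfold kernelDxy
  push_cast
  ring

@[fun_prop]
lemma continuous_kernel : Continuous (kernel h t x y) := by
  unfold kernel phase
  fun_prop

@[fun_prop]
lemma continuous_kernelDt : Continuous (kernelDt h t x y) := by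
  unfold kernelDt
  fun_prop

@[fun_prop]
lemma continuous_kernelDy : Continuous (kernelDy h t x y) := by
  unfold kernelDy
  fun_prop

@[fun_prop]
lemma continuous_kernelDxy : Continuous (kernelDxy h t x y) := by
  unfold kernelDxy
  fun_prop

lemma norm_kernel_le : ‖kernel h t x y w‖ ≤ 1 := by
  have hphase : I / h * (phase t x y w : ℂ) = ↑(phase t x y w / h) * I := by push_cast; ring
  rw [kernel, norm_mul, hphase, Complex.norm_exp_ofReal_mul_I, mul_one, Complex.norm_real,
    Real.norm_of_nonneg (inv_pos.2 (cosh_pos t)).le]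
  exact inv_le_one_of_one_le₀ (one_le_cosh t)

lemma abs_mul_tanh_add_snd_mul_inv_cosh_le :
    |x * tanh t + w.2 * (cosh t)⁻¹| ≤ (1 + |x| + |y|) * (1 + ‖w‖) := by
  have := abs_mul_tanh_add_mul_inv_cosh_le x w.2 t
  have : |w.2| ≤ ‖w‖ := Real.norm_eq_abs w.2 ▸ norm_snd_le w
  nlinarith [abs_nonneg x, abs_nonneg y, norm_nonneg w]

lemma abs_mul_tanh_add_fst_mul_inv_cosh_le :
    |y * tanh t + w.1 * (cosh t)⁻¹| ≤ (1 + |x| + |y|) * (1 + ‖w‖) := by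
  have := abs_mul_tanh_add_mul_inv_cosh_le y w.1 t
  have : |w.1| ≤ ‖w‖ := Real.norm_eq_abs w.1 ▸ norm_fst_le w
  nlinarith [abs_nonneg x, abs_nonneg y, norm_nonneg w]

lemma abs_deriv_phase_t_le :
    |(cosh t)⁻¹ * ((x * y - w.1 * w.2) * (cosh t)⁻¹ - (x * w.1 + y * w.2) * tanh t)|
      ≤ ((1 + |x| + |y|) * (1 + ‖w‖)) ^ 2 := by
  have hsech : 0 < (cosh t)⁻¹ := inv_pos.2 (cosh_pos t)
  have h1 : |w.1| ≤ ‖w‖ := Real.norm_eq_abs w.1 ▸ norm_fst_le w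
  have h2 : |w.2| ≤ ‖w‖ := Real.norm_eq_abs w.2 ▸ norm_snd_le w
  have hlin : |x * w.1 + y * w.2| ≤ |x| * |w.1| + |y| * |w.2| := by
    grw [abs_add_le, abs_mul, abs_mul]
  have hquad : |x * y - w.1 * w.2| ≤ |x| * |y| + |w.1| * |w.2| := by
    grw [abs_sub, abs_mul, abs_mul]
  calc _ = (cosh t)⁻¹ * |-(x * w.1 + y * w.2) * tanh t + (x * y - w.1 * w.2) * (cosh t)⁻¹| := by
        rw [abs_mul, abs_of_pos hsech]; ring_nf
    _ ≤ |-(x * w.1 + y * w.2)| + |x * y - w.1 * w.2| :=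
        (mul_le_of_le_one_left (abs_nonneg _) (inv_le_one_of_one_le₀ (one_le_cosh t))).trans
          (abs_mul_tanh_add_mul_inv_cosh_le _ _ t)
    _ ≤ (|x| + ‖w‖) * (|y| + ‖w‖) := by
        rw [abs_neg]
        nlinarith [mul_le_mul_of_nonneg_left h1 (abs_nonneg x),
          mul_le_mul_of_nonneg_left h2 (abs_nonneg y),
          mul_le_mul h1 h2 (abs_nonneg _) (norm_nonneg w)]
    _ ≤ ((1 + |x| + |y|) * (1 + ‖w‖)) ^ 2 := by
        rw [sq]
        have := norm_nonneg w
        gcongr <;> nlinarith [abs_nonneg x, abs_nonneg y]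

lemma one_le_one_add_abs_add_abs_mul_one_add_norm : 1 ≤ (1 + |x| + |y|) * (1 + ‖w‖) :=
  one_le_mul_of_one_le_of_one_le (by linarith [abs_nonneg x, abs_nonneg y])
    (by linarith [norm_nonneg w])

lemma norm_kernelDy_le :
    ‖kernelDy h t x y w‖ ≤ (1 + |h|⁻¹) ^ 2 * (1 + |x| + |y|) ^ 2 * (1 + ‖w‖) ^ 2 := by
  calc ‖kernelDy h t x y w‖ ≤ |h|⁻¹ * ((1 + |x| + |y|) * (1 + ‖w‖)) * 1 := by
        rw [kernelDy, norm_mul, norm_mul, Complex.norm_real, Real.norm_eq_abs]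
        gcongr
        · simp
        · exact abs_mul_tanh_add_snd_mul_inv_cosh_le w
        · exact norm_kernel_le h w
    _ ≤ (1 + |h|⁻¹) ^ 2 * ((1 + |x| + |y|) * (1 + ‖w‖)) ^ 2 := by
        have hq : 0 ≤ |h|⁻¹ := by positivity
        have hL := one_le_one_add_abs_add_abs_mul_one_add_norm w (x := x) (y := y)
        generalize (1 + |x| + |y|) * (1 + ‖w‖) = L at hL ⊢
        nlinarith [mul_le_mul_of_nonneg_left hL hq]
    _ = _ := by ring

lemma norm_kernelDt_le :
    ‖kernelDt h t x y w‖ ≤ (1 + |h|⁻¹) ^ 2 * (1 + |x| + |y|) ^ 2 * (1 + ‖w‖) ^ 2 := by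
  calc ‖kernelDt h t x y w‖ ≤ (1 + |h|⁻¹ * ((1 + |x| + |y|) * (1 + ‖w‖)) ^ 2) * 1 := by
        rw [kernelDt, norm_mul]
        gcongr
        · grw [norm_add_le, norm_neg, norm_mul, Complex.norm_real, Complex.norm_real,
            Real.norm_eq_abs, Real.norm_eq_abs, abs_deriv_phase_t_le w, (abs_tanh_lt_one t).le]
          simp
        · exact norm_kernel_le h w
    _ ≤ (1 + |h|⁻¹) ^ 2 * ((1 + |x| + |y|) * (1 + ‖w‖)) ^ 2 := by
        have hq : 0 ≤ |h|⁻¹ := by positivity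
        have hL := one_le_one_add_abs_add_abs_mul_one_add_norm w (x := x) (y := y)
        generalize (1 + |x| + |y|) * (1 + ‖w‖) = L at hL ⊢
        nlinarith [mul_le_mul_of_nonneg_left hL hq]
    _ = _ := by ring

lemma norm_kernelDxy_le :
    ‖kernelDxy h t x y w‖ ≤ (1 + |h|⁻¹) ^ 2 * (1 + |x| + |y|) ^ 2 * (1 + ‖w‖) ^ 2 := by
  calc ‖kernelDxy h t x y w‖ ≤ (|h|⁻¹ + |h|⁻¹ ^ 2 * ((1 + |x| + |y|) * (1 + ‖w‖)) ^ 2) * 1 := by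
        rw [kernelDxy, norm_mul]
        gcongr
        · grw [norm_add_le, norm_mul, norm_mul, norm_pow, Complex.norm_real, Complex.norm_real,
            Real.norm_eq_abs, Real.norm_eq_abs, abs_mul, (abs_tanh_lt_one t).le,
            abs_mul_tanh_add_fst_mul_inv_cosh_le (x := x) w,
            abs_mul_tanh_add_snd_mul_inv_cosh_le (y := y) w]
          simp [sq]
        · exact norm_kernel_le h w
    _ ≤ (1 + |h|⁻¹) ^ 2 * ((1 + |x| + |y|) * (1 + ‖w‖)) ^ 2 := by
        have hq : 0 ≤ |h|⁻¹ := by positivity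
        have hL := one_le_one_add_abs_add_abs_mul_one_add_norm w (x := x) (y := y)
        generalize (1 + |x| + |y|) * (1 + ‖w‖) = L at hL ⊢
        nlinarith [mul_le_mul_of_nonneg_left hL hq]
    _ = _ := by ring

end Kernel

section Integrals

variable (h t x y : ℝ) (F : 𝓢(ℝ × ℝ, ℂ))

lemma integrable_kernel_mul : Integrable (fun w => kernel h t x y w * F w) :=
  F.integrable_mul_of_norm_le (continuous_kernel h).aestronglyMeasurable (C := 1) (k := 0)
    (by simpa using norm_kernel_le h)

lemma integrable_kernelDt_mul : Integrable (fun w => kernelDt h t x y w * F w) :=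
  F.integrable_mul_of_norm_le (continuous_kernelDt h).aestronglyMeasurable (norm_kernelDt_le h)

lemma integrable_kernelDy_mul : Integrable (fun w => kernelDy h t x y w * F w) :=
  F.integrable_mul_of_norm_le (continuous_kernelDy h).aestronglyMeasurable (norm_kernelDy_le h)

lemma integrable_kernelDxy_mul : Integrable (fun w => kernelDxy h t x y w * F w) :=
  F.integrable_mul_of_norm_le (continuous_kernelDxy h).aestronglyMeasurable (norm_kernelDxy_le h)

lemma hasDerivAt_integral_kernel_mul_t :
    HasDerivAt (fun s => ∫ w, kernel h s x y w * F w) (∫ w, kernelDt h t x y w * F w) t :=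
  F.hasDerivAt_integral_mul (f := fun s => kernel h s x y) (f' := fun s => kernelDt h s x y)
    (fun _ => (continuous_kernel h).aestronglyMeasurable)
    (integrable_kernel_mul h t x y F) (continuous_kernelDt h).aestronglyMeasurable
    continuousAt_const (fun _ => norm_kernelDt_le h) (fun _ => hasDerivAt_kernel_t h)

lemma hasDerivAt_integral_kernel_mul_y :
    HasDerivAt (fun b => ∫ w, kernel h t x b w * F w) (∫ w, kernelDy h t x y w * F w) y :=
  F.hasDerivAt_integral_mul (f := fun b => kernel h t x b) (f' := fun b => kernelDy h t x b)
    (fun _ => (continuous_kernel h).aestronglyMeasurable)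
    (integrable_kernel_mul h t x y F) (continuous_kernelDy h).aestronglyMeasurable
    (by fun_prop) (fun _ => norm_kernelDy_le h) (fun _ => hasDerivAt_kernel_y h)

lemma hasDerivAt_integral_kernelDy_mul_x :
    HasDerivAt (fun a => ∫ w, kernelDy h t a y w * F w) (∫ w, kernelDxy h t x y w * F w) x :=
  F.hasDerivAt_integral_mul (f := fun a => kernelDy h t a y) (f' := fun a => kernelDxy h t a y)
    (fun _ => (continuous_kernelDy h).aestronglyMeasurable)
    (integrable_kernelDy_mul h t x y F) (continuous_kernelDxy h).aestronglyMeasurable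
    (by fun_prop) (fun _ => norm_kernelDxy_le h) (fun _ => hasDerivAt_kernelDy_x h)

lemma integral_kernel_pde (hh : h ≠ 0) :
    (h / I) * (∫ w, kernelDt h t x y w * F w) - (h : ℂ) ^ 2 * (∫ w, kernelDxy h t x y w * F w)
      - ((x * y : ℝ) : ℂ) * (∫ w, kernel h t x y w * F w) = 0 := by
  have hDt := (integrable_kernelDt_mul h t x y F).const_mul (h / I)
  have hDxy := (integrable_kernelDxy_mul h t x y F).const_mul ((h : ℂ) ^ 2)
  have hK := (integrable_kernel_mul h t x y F).const_mul ((x * y : ℝ) : ℂ)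
  calc _ = ∫ w, ((h / I) * kernelDt h t x y w - (h : ℂ) ^ 2 * kernelDxy h t x y w
        - ((x * y : ℝ) : ℂ) * kernel h t x y w) * F w := by
        simp_rw [sub_mul, mul_assoc]
        rw [integral_sub _ hK, integral_sub hDt hDxy, integral_const_mul,
          integral_const_mul, integral_const_mul]
        exact hDt.sub hDxy
    _ = 0 := by simp only [kernel_pde h _ hh, zero_mul, integral_zero]

end Integrals

lemma fioSolution_eq_integral (h : ℝ) (v : 𝓢(ℝ × ℝ, ℂ)) (t x y : ℝ) :
    fioSolution h v t x y =
      (((2 * π * h) ^ 2)⁻¹ : ℝ) * ∫ w, kernel h t x y w * scFourier h v w := by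
  rw [fioSolution, mul_assoc, ← integral_const_mul]
  congr 2 with w
  simp only [kernel, phase]
  push_cast
  ring

lemma fioSolution_zero {h : ℝ} (hh : h ≠ 0) (v : 𝓢(ℝ × ℝ, ℂ)) (x y : ℝ) :
    fioSolution h v 0 x y = v (x, y) := by
  have hkernel : ∀ w, kernel h 0 x y w = exp (I / h * ↑(x * w.1 + y * w.2)) := fun w => by
    simp [kernel, phase]
  simp_rw [fioSolution_eq_integral, hkernel, integral_exp_mul_scFourier hh, ← mul_assoc,
    ← Complex.ofReal_mul, inv_mul_cancel₀ (by positivity : (2 * π * h) ^ 2 ≠ 0),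
    Complex.ofReal_one, one_mul]

/-- The Fourier integral operator ansatz with phase `(xy-ξη)tanh t + (xξ+yη)sech t` and
amplitude `sech t` solves the evolution equation `(h/i)∂ₜu - h²∂ₓ∂_y u - xy·u = 0`
exactly, with initial condition `u(0,·,·) = v`. -/
theorem fioSolution_solves_evolution_equation
    (h : ℝ) (hh : 0 < h) (v : SchwartzMap (ℝ × ℝ) ℂ) (t x y : ℝ) :
    ((h : ℂ) / Complex.I) * deriv (fun s => fioSolution h v s x y) t -
      (h : ℂ) ^ 2 * deriv (fun a => deriv (fun b => fioSolution h v t a b) y) x -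
      ((x * y : ℝ) : ℂ) * fioSolution h v t x y = 0 ∧
    fioSolution h v 0 x y = v (x, y) := by
  set F := scFourierSchwartz hh.ne' v
  set c : ℂ := ((((2 * π * h) ^ 2)⁻¹ : ℝ) : ℂ)
  have hu : ∀ t x y, fioSolution h v t x y = c * ∫ w, kernel h t x y w * F w := fun t x y => by
    rw [fioSolution_eq_integral, coe_scFourierSchwartz]
  have hDy : ∀ a, deriv (fun b => fioSolution h v t a b) y =
      c * ∫ w, kernelDy h t a y w * F w := fun a => by
    simp_rw [hu]
    exact ((hasDerivAt_integral_kernel_mul_y h t a y F).const_mul c).deriv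
  have hDt : deriv (fun s => fioSolution h v s x y) t = c * ∫ w, kernelDt h t x y w * F w := by
    simp_rw [hu]
    exact ((hasDerivAt_integral_kernel_mul_t h t x y F).const_mul c).deriv
  have hDxy : deriv (fun a => deriv (fun b => fioSolution h v t a b) y) x =
      c * ∫ w, kernelDxy h t x y w * F w := by
    simp_rw [hDy]
    exact ((hasDerivAt_integral_kernelDy_mul_x h t x y F).const_mul c).deriv
  refine ⟨?_, fioSolution_zero hh.ne' v x y⟩
  rw [hDt, hDxy, hu]
  linear_combination c * integral_kernel_pde h t x y F hh.ne'
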